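/- (Peleg's second induction step) Let C = {S_1,…,S_k} be a minimal balanced collection on N with weights λ, let p ∉ N, and let I ⊆ {1,…,k} with ∑_{i∈I} λ_{S_i} < 1. Then C' = {S_i ∪ {p} : i ∈ I} ∪ {S_j : j ∉ I} ∪ {{p}} is a minimal balanced collection on N ∪ {p}, with the weight of {p} equal to 1 - ∑_{i∈I} λ_{S_i}. -/

import Mathlib

open Finset

def IsBalancedOn {α : Type*} [DecidableEq α] (M : Finset α) (B : Finset (Finset α))
    (w : Finset α → ℝ) : Prop :=
  (∀ S ∈ B, S ⊆ M ∧ S.Nonempty) ∧ (∀ S ∈ B, 0 < w S) ∧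
  ∀ i ∈ M, ∑ S ∈ B, w S * (if i ∈ S then (1 : ℝ) else 0) = 1

def IsBalanced {α : Type*} [DecidableEq α] (M : Finset α) (B : Finset (Finset α)) : Prop :=
  ∃ w : Finset α → ℝ, IsBalancedOn M B w

def IsMinimalBalanced {α : Type*} [DecidableEq α] (M : Finset α)
    (B : Finset (Finset α)) : Prop :=
  IsBalanced M B ∧ ∀ B' ⊆ B, B' ≠ B → ¬ IsBalanced M B'

/-!
Write `φ = insertIfMem p I`, which inserts `p` into the members of `I`, so that the new collection is
`{p} ∪ φ(C)`. Giving `φ S` the weight `λ S` and `{p}` the remaining weight `1 - ∑_{S ∈ I} λ S`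
balances it. For minimality, extend the weights of a balanced subcollection by zero and pull
them back along `φ`: on `N` they balance `C`, and the weights of a minimal balanced collection
are unique even among signed solutions, so they are `λ`. Hence every `φ S` carries positive
weight, and the equation at `p` then forces `{p}` to carry positive weight as well.
-/

section Balanced

variable {α : Type*} [DecidableEq α] {M : Finset α} {B : Finset (Finset α)}

theorem isBalancedOn_filter_pos {w : Finset α → ℝ} (hB : ∀ S ∈ B, S ⊆ M ∧ S.Nonempty)
    (hw : ∀ S ∈ B, 0 ≤ w S)
    (hsum : ∀ i ∈ M, ∑ S ∈ B, w S * (if i ∈ S then (1 : ℝ) else 0) = 1) :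
    IsBalancedOn M (B.filter (0 < w ·)) w := by
  refine ⟨fun S hS => hB S (mem_filter.mp hS).1, fun S hS => (mem_filter.mp hS).2,
    fun i hi => ?_⟩
  rw [sum_filter_of_ne fun S hS hne => ?_, hsum i hi]
  exact (hw S hS).lt_of_ne' fun h => hne (by rw [h, zero_mul])

theorem IsBalancedOn.not_isMinimalBalanced_of_lt {lam mu : Finset α → ℝ}
    (hl : IsBalancedOn M B lam)
    (hmu : ∀ i ∈ M, ∑ S ∈ B, mu S * (if i ∈ S then (1 : ℝ) else 0) = 1)
    {S₀ : Finset α} (hS₀ : S₀ ∈ B) (hlt : mu S₀ < lam S₀) : ¬ IsMinimalBalanced M B := by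
  intro hmin
  -- Move from `lam` towards `mu` until the first weight vanishes, at `T`.
  obtain ⟨T, hTA, hTmin⟩ := (B.filter fun S => mu S < lam S).exists_min_image
    (fun S => lam S / (lam S - mu S)) ⟨S₀, mem_filter.mpr ⟨hS₀, hlt⟩⟩
  obtain ⟨hTB, hTlt⟩ := mem_filter.mp hTA
  set t := lam T / (lam T - mu T)
  set ν : Finset α → ℝ := fun S => lam S - t * (lam S - mu S)
  have hgap : 0 < lam T - mu T := sub_pos.mpr hTlt
  have ht : 0 < t := div_pos (hl.2.1 T hTB) hgap
  have hνT : ν T = 0 := sub_eq_zero.mpr (div_mul_cancel₀ _ hgap.ne').symm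
  have hν : ∀ S ∈ B, 0 ≤ ν S := by
    intro S hS
    by_cases h : mu S < lam S
    · exact sub_nonneg.mpr
        ((le_div_iff₀ (sub_pos.mpr h)).mp (hTmin S (mem_filter.mpr ⟨hS, h⟩)))
    · nlinarith [hl.2.1 S hS]
  have hνsum : ∀ i ∈ M, ∑ S ∈ B, ν S * (if i ∈ S then (1 : ℝ) else 0) = 1 := by
    intro i hi
    simp only [ν, sub_mul, mul_assoc, sum_sub_distrib, ← mul_sum, hl.2.2 i hi, hmu i hi]
    ring
  refine hmin.2 _ (filter_subset _ B) (fun h => ?_) ⟨ν, isBalancedOn_filter_pos hl.1 hν hνsum⟩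
  rw [← h] at hTB
  exact (mem_filter.mp hTB).2.ne' hνT

theorem IsMinimalBalanced.eq_of_sum_eq_one {lam mu : Finset α → ℝ}
    (hmin : IsMinimalBalanced M B) (hl : IsBalancedOn M B lam)
    (hmu : ∀ i ∈ M, ∑ S ∈ B, mu S * (if i ∈ S then (1 : ℝ) else 0) = 1) :
    ∀ S ∈ B, mu S = lam S := by
  intro S hS
  rcases lt_trichotomy (mu S) (lam S) with hlt | heq | hgt
  · exact absurd hmin (hl.not_isMinimalBalanced_of_lt hmu hS hlt)
  · exact heq
  · -- the reflection `2 lam - mu` of `mu` through `lam` also solves the equations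
    refine absurd hmin (hl.not_isMinimalBalanced_of_lt (mu := fun S => 2 * lam S - mu S)
      (fun i hi => ?_) hS (by linarith))
    simp only [sub_mul, mul_assoc, sum_sub_distrib, ← mul_sum, hl.2.2 i hi, hmu i hi]
    norm_num

theorem IsBalancedOn.sum_ite_mem_eq_one {B' : Finset (Finset α)} {mu : Finset α → ℝ}
    (hmu : IsBalancedOn M B' mu) (hB' : B' ⊆ B) :
    ∀ i ∈ M, ∑ S ∈ B, (if S ∈ B' then mu S else 0) * (if i ∈ S then (1 : ℝ) else 0) = 1 := by
  intro i hi
  simp only [ite_mul, zero_mul]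
  rw [sum_ite_mem, inter_eq_right.mpr hB', hmu.2.2 i hi]

end Balanced

section Lift

variable {α : Type*} [DecidableEq α] (p : α) (I : Finset (Finset α))

def insertIfMem (S : Finset α) : Finset α := if S ∈ I then insert p S else S

def liftedWeight (c : ℝ) (lam : Finset α → ℝ) (T : Finset α) : ℝ :=
  if T = {p} then c else lam (T.erase p)

variable {p I}

theorem erase_insertIfMem {S : Finset α} (hpS : p ∉ S) : (insertIfMem p I S).erase p = S := by
  unfold insertIfMem
  split_ifs
  · exact erase_insert hpS
  · exact erase_eq_of_notMem hpS

theorem mem_insertIfMem_of_ne {S : Finset α} {i : α} (hi : i ≠ p) :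
    i ∈ insertIfMem p I S ↔ i ∈ S := by
  unfold insertIfMem
  split_ifs <;> simp [hi]

theorem self_mem_insertIfMem {S : Finset α} (hpS : p ∉ S) : p ∈ insertIfMem p I S ↔ S ∈ I := by
  unfold insertIfMem
  split_ifs with h <;> simp [h, hpS]

theorem insertIfMem_ne_singleton {S : Finset α} (hpS : p ∉ S) (hS : S.Nonempty) :
    insertIfMem p I S ≠ {p} := fun h =>
  hS.ne_empty (by rw [← erase_insertIfMem (I := I) hpS, h, erase_singleton])

theorem liftedWeight_insertIfMem {c : ℝ} {lam : Finset α → ℝ} {S : Finset α} (hpS : p ∉ S)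
    (hS : S.Nonempty) : liftedWeight p c lam (insertIfMem p I S) = lam S := by
  rw [liftedWeight, if_neg (insertIfMem_ne_singleton hpS hS), erase_insertIfMem hpS]

theorem image_insert_union_sdiff_eq {C : Finset (Finset α)} (hI : I ⊆ C) :
    I.image (insert p ·) ∪ (C \ I) = C.image (insertIfMem p I) := by
  ext T
  simp only [mem_union, mem_image, mem_sdiff, insertIfMem]
  constructor
  · rintro (⟨S, hS, rfl⟩ | ⟨hT, hTI⟩)
    · exact ⟨S, hI hS, if_pos hS⟩
    · exact ⟨T, hT, if_neg hTI⟩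
  · rintro ⟨S, hS, rfl⟩
    split_ifs with h
    · exact Or.inl ⟨S, h, rfl⟩
    · exact Or.inr ⟨hS, h⟩

variable {N : Finset α} {C : Finset (Finset α)}

theorem sum_insert_image_insertIfMem (hC : ∀ S ∈ C, S ⊆ N ∧ S.Nonempty) (hp : p ∉ N)
    (f : Finset α → ℝ) :
    ∑ T ∈ insert {p} (C.image (insertIfMem p I)), f T =
      f {p} + ∑ S ∈ C, f (insertIfMem p I S) := by
  have hpC : ∀ S ∈ C, p ∉ S := fun S hS h => hp ((hC S hS).1 h)
  have hsingleton : {p} ∉ C.image (insertIfMem p I) := by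
    simp only [mem_image, not_exists, not_and]
    exact fun S hS => insertIfMem_ne_singleton (hpC S hS) (hC S hS).2
  rw [sum_insert hsingleton, sum_image fun S hS S' hS' h => by
    rw [← erase_insertIfMem (I := I) (hpC S hS), h, erase_insertIfMem (hpC S' hS')]]

theorem sum_insert_image_insertIfMem_of_mem (hC : ∀ S ∈ C, S ⊆ N ∧ S.Nonempty) (hp : p ∉ N)
    (w : Finset α → ℝ) {i : α} (hi : i ∈ N) :
    ∑ T ∈ insert {p} (C.image (insertIfMem p I)), w T * (if i ∈ T then (1 : ℝ) else 0) =
      ∑ S ∈ C, w (insertIfMem p I S) * (if i ∈ S then (1 : ℝ) else 0) := by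
  have hip : i ≠ p := fun h => hp (h ▸ hi)
  rw [sum_insert_image_insertIfMem hC hp, if_neg (by simpa using hip), mul_zero, zero_add]
  simp only [mem_insertIfMem_of_ne hip]

theorem sum_insert_image_insertIfMem_self (hC : ∀ S ∈ C, S ⊆ N ∧ S.Nonempty) (hp : p ∉ N)
    (hI : I ⊆ C) (w : Finset α → ℝ) :
    ∑ T ∈ insert {p} (C.image (insertIfMem p I)), w T * (if p ∈ T then (1 : ℝ) else 0) =
      w {p} + ∑ S ∈ I, w (insertIfMem p I S) := by
  rw [sum_insert_image_insertIfMem hC hp, if_pos (mem_singleton_self p), mul_one]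
  have hpC : ∀ S ∈ C, p ∉ S := fun S hS h => hp ((hC S hS).1 h)
  calc w {p} + ∑ S ∈ C, w (insertIfMem p I S) * (if p ∈ insertIfMem p I S then 1 else 0)
      = w {p} + ∑ S ∈ C, if S ∈ I then w (insertIfMem p I S) else 0 := by
        congr 1
        refine sum_congr rfl fun S hS => ?_
        simp only [self_mem_insertIfMem (hpC S hS), mul_ite, mul_one, mul_zero]
    _ = w {p} + ∑ S ∈ I, w (insertIfMem p I S) := by rw [sum_ite_mem, inter_eq_right.mpr hI]

variable {lam : Finset α → ℝ}

theorem isBalancedOn_insert_image_insertIfMem (hp : p ∉ N) (hC : IsBalancedOn N C lam)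
    (hI : I ⊆ C) (hsum : ∑ S ∈ I, lam S < 1) :
    IsBalancedOn (insert p N) (insert {p} (C.image (insertIfMem p I)))
      (liftedWeight p (1 - ∑ S ∈ I, lam S) lam) := by
  have hpC : ∀ S ∈ C, p ∉ S := fun S hS h => hp ((hC.1 S hS).1 h)
  have hw : ∀ S ∈ C, liftedWeight p (1 - ∑ S ∈ I, lam S) lam (insertIfMem p I S) = lam S :=
    fun S hS => liftedWeight_insertIfMem (hpC S hS) (hC.1 S hS).2
  refine ⟨?_, ?_, ?_⟩
  · simp only [forall_mem_insert, forall_mem_image]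
    refine ⟨⟨by simp, singleton_nonempty p⟩, fun S hS => ⟨?_, ?_⟩⟩
    · unfold insertIfMem
      split_ifs
      · exact insert_subset_insert p (hC.1 S hS).1
      · exact (hC.1 S hS).1.trans (subset_insert p N)
    · obtain ⟨x, hx⟩ := (hC.1 S hS).2
      have hxp : x ≠ p := by
        rintro rfl
        exact hpC S hS hx
      exact ⟨x, (mem_insertIfMem_of_ne hxp).mpr hx⟩
  · simp only [forall_mem_insert, forall_mem_image]
    refine ⟨by simpa [liftedWeight] using hsum, fun S hS => ?_⟩
    rw [hw S hS]
    exact hC.2.1 S hS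
  · intro i hi
    rcases mem_insert.mp hi with rfl | hi
    · rw [sum_insert_image_insertIfMem_self hC.1 hp hI, sum_congr rfl fun S hS => hw S (hI hS)]
      simp [liftedWeight]
    · rw [sum_insert_image_insertIfMem_of_mem hC.1 hp _ hi,
        sum_congr rfl fun S hS => by rw [hw S hS], hC.2.2 i hi]

theorem isMinimalBalanced_insert_image_insertIfMem (hp : p ∉ N) (hC : IsBalancedOn N C lam)
    (hmin : IsMinimalBalanced N C) (hI : I ⊆ C) (hsum : ∑ S ∈ I, lam S < 1) :
    IsMinimalBalanced (insert p N) (insert {p} (C.image (insertIfMem p I))) := by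
  refine ⟨⟨_, isBalancedOn_insert_image_insertIfMem hp hC hI hsum⟩, ?_⟩
  rintro B' hB' hne ⟨mu, hmu⟩
  set mu' : Finset α → ℝ := fun T => if T ∈ B' then mu T else 0
  have hmu' := hmu.sum_ite_mem_eq_one hB'
  have hpos : ∀ T, 0 < mu' T → T ∈ B' := fun T h => by
    by_contra hT
    simp [mu', hT] at h
  have hpull : ∀ S ∈ C, mu' (insertIfMem p I S) = lam S :=
    hmin.eq_of_sum_eq_one hC fun i hi => by
      rw [← sum_insert_image_insertIfMem_of_mem hC.1 hp mu' hi]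
      exact hmu' i (mem_insert_of_mem hi)
  have hp_eq := hmu' p (mem_insert_self p N)
  rw [sum_insert_image_insertIfMem_self hC.1 hp hI,
    sum_congr rfl fun S hS => hpull S (hI hS)] at hp_eq
  refine hne (hB'.antisymm ?_)
  rw [insert_subset_iff, image_subset_iff]
  refine ⟨hpos _ (by linarith), fun S hS => hpos _ ?_⟩
  rw [hpull S hS]
  exact hC.2.1 S hS

end Lift

theorem stmt12 {α : Type*} [DecidableEq α]
    (N : Finset α) (p : α) (hp : p ∉ N)
    (C : Finset (Finset α)) (lam : Finset α → ℝ)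
    (hC : IsBalancedOn N C lam) (hmin : IsMinimalBalanced N C)
    (I : Finset (Finset α)) (hI : I ⊆ C) (hsum : ∑ S ∈ I, lam S < 1) :
    IsMinimalBalanced (insert p N)
      (insert ({p} : Finset α) ((I.image (insert p ·)) ∪ (C \ I))) ∧
    ∃ w : Finset α → ℝ,
      IsBalancedOn (insert p N)
        (insert ({p} : Finset α) ((I.image (insert p ·)) ∪ (C \ I))) w ∧
      w {p} = 1 - ∑ S ∈ I, lam S := by
  rw [image_insert_union_sdiff_eq hI]
  exact ⟨isMinimalBalanced_insert_image_insertIfMem hp hC hmin hI hsum, _,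
    isBalancedOn_insert_image_insertIfMem hp hC hI hsum, if_pos rfl⟩
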